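/- arXiv:1406.1646 — 3 statements merged into one kernel-verified Lean document; each statement's English description precedes it below -/
import Mathlib

section
/- Let a, b be complex numbers of modulus 1 with a ∉ {1, -1}, b ∉ {1, -1}, a ≠ b, a ≠ b^{-1}, and set t_a = a + a^{-1}, t_b = b + b^{-1}. Then 2·∏_{η ∈ D, η ≠ 1} (1-η)^{-1} · (q_0 + q_1 + ... + q_6) = (2/(t_a - t_b)^2)·((1/(4 - t_a^2) + 1/(4 - t_b^2))(1 - 1/p)^2 + 2/p), where D = {1, a^2, a^{-2}, b^2, b^{-2}, ab, (ab)^{-1}, ab^{-1}, a^{-1}b} (assumed to consist of 9 distinct elements), and q_0 = 1, q_1 = t_a t_b + 2, q_2 = 2 - (t_a+t_b)^2 - 2(t_a^2 + t_b^2 + t_a t_b - 2)p^{-1} + p^{-2}, q_3 = t_a t_b + 2 + 2((t_a+t_b)^2 + (t_a^2-2)(t_b^2-2))p^{-1} + (t_a t_b + 2)p^{-2}, q_4 = 1 - 2(t_a^2 + t_b^2 + t_a t_b - 2)p^{-1} - ((t_a+t_b)^2 - 2)p^{-2}, q_5 = (t_a t_b + 2)p^{-2}, q_6 = p^{-2}.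 -/
set_option maxHeartbeats 1000000 in
private lemma aux_frac (A B T P : ℂ) (hA : A ≠ 0) (hB : B ≠ 0) (hT : T ≠ 0) (hP : P ≠ 0) :
    (2 / T^2) * ((1 / A + 1 / B) * (1 - P⁻¹)^2 + 2 * P⁻¹)
      = (2 * ((B + A) * (P - 1)^2 + 2 * P * (A * B))) / (T^2 * (A * (B * P^2))) := by
  obtain ⟨iA, hA'⟩ : ∃ x, A * x = 1 := ⟨A⁻¹, mul_inv_cancel₀ hA⟩
  obtain ⟨iB, hB'⟩ : ∃ x, B * x = 1 := ⟨B⁻¹, mul_inv_cancel₀ hB⟩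
  obtain ⟨iT, hT'⟩ : ∃ x, T * x = 1 := ⟨T⁻¹, mul_inv_cancel₀ hT⟩
  obtain ⟨iP, hP'⟩ : ∃ x, P * x = 1 := ⟨P⁻¹, mul_inv_cancel₀ hP⟩
  have e1 : A⁻¹ = iA := inv_eq_of_mul_eq_one_right hA'
  have e2 : B⁻¹ = iB := inv_eq_of_mul_eq_one_right hB'
  have e3 : T⁻¹ = iT := inv_eq_of_mul_eq_one_right hT'
  have e4 : P⁻¹ = iP := inv_eq_of_mul_eq_one_right hP'
  simp only [div_eq_mul_inv, mul_inv, ← inv_pow, e1, e2, e3, e4]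
  linear_combination ((-2)*iB*iT^2*iP^2 + (4)*P*iB*iT^2*iP^2 + (-2)*P^2*iB*iT^2*iP^2 + (-4)*B*P*iB*iT^2*iP^2) * hA' + ((-2)*iA*iT^2*iP^2 + (-4)*P*iT^2*iP^2 + (4)*P*iA*iT^2*iP^2 + (-2)*P^2*iA*iT^2*iP^2) * hB' + ((-4)*iT^2*iP + (-2)*iB*iT^2 + (4)*iB*iT^2*iP + (-2)*iA*iT^2 + (4)*iA*iT^2*iP + (-2)*P*iB*iT^2*iP + (-2)*P*iA*iT^2*iP) * hP'

set_option maxHeartbeats 2000000 in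
set_option maxRecDepth 10000 in
theorem statement11 (a b : ℂ) (ha : ‖a‖ = 1) (hb : ‖b‖ = 1)
    (hdist : ([1, a^2, (a⁻¹)^2, b^2, (b⁻¹)^2, a*b, (a*b)⁻¹, a*b⁻¹, a⁻¹*b] :
      List ℂ).Pairwise (· ≠ ·))
    (p : ℝ) (hp : 0 < p)
    (ta tb : ℂ) (hta : ta = a + a⁻¹) (htb : tb = b + b⁻¹)
    (q0 q1 q2 q3 q4 q5 q6 : ℂ)
    (hq0 : q0 = 1)
    (hq1 : q1 = ta * tb + 2)
    (hq2 : q2 = 2 - (ta + tb)^2 - 2*(ta^2 + tb^2 + ta*tb - 2) * (p : ℂ)⁻¹ + ((p : ℂ)⁻¹)^2)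
    (hq3 : q3 = ta * tb + 2 + 2*((ta + tb)^2 + (ta^2 - 2)*(tb^2 - 2)) * (p : ℂ)⁻¹
        + (ta * tb + 2) * ((p : ℂ)⁻¹)^2)
    (hq4 : q4 = 1 - 2*(ta^2 + tb^2 + ta*tb - 2) * (p : ℂ)⁻¹ - ((ta + tb)^2 - 2) * ((p : ℂ)⁻¹)^2)
    (hq5 : q5 = (ta * tb + 2) * ((p : ℂ)⁻¹)^2)
    (hq6 : q6 = ((p : ℂ)⁻¹)^2) :
    2 * ((1 - a^2)⁻¹ * (1 - (a⁻¹)^2)⁻¹ * (1 - b^2)⁻¹ * (1 - (b⁻¹)^2)⁻¹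
        * (1 - a*b)⁻¹ * (1 - (a*b)⁻¹)⁻¹ * (1 - a*b⁻¹)⁻¹ * (1 - a⁻¹*b)⁻¹)
      * (q0 + q1 + q2 + q3 + q4 + q5 + q6)
    = (2 / (ta - tb)^2) *
        ((1 / (4 - ta^2) + 1 / (4 - tb^2)) * (1 - (p : ℂ)⁻¹)^2 + 2 * (p : ℂ)⁻¹) := by
  have ha0 : a ≠ 0 := by intro h; simp [h] at ha
  have hb0 : b ≠ 0 := by intro h; simp [h] at hb
  have hp0 : (p : ℂ) ≠ 0 := by exact_mod_cast hp.ne'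
  simp only [List.pairwise_cons, List.mem_cons, List.not_mem_nil, List.mem_singleton,
    forall_eq_or_imp, forall_eq, ne_eq] at hdist
  obtain ⟨⟨c1, c2, c3, c4, c5, c6, c7, c8, -⟩, -⟩ := hdist
  have ha2 : a ^ 2 ≠ 1 := fun h => c1 h.symm
  have hb2 : b ^ 2 ≠ 1 := fun h => c3 h.symm
  have hab : a * b ≠ 1 := fun h => c5 h.symm
  have hab' : a * b⁻¹ ≠ 1 := fun h => c7 h.symm
  have f1 : 1 - a ^ 2 ≠ 0 := sub_ne_zero_of_ne fun h => ha2 h.symm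
  have f3 : 1 - b ^ 2 ≠ 0 := sub_ne_zero_of_ne fun h => hb2 h.symm
  have f5 : 1 - a * b ≠ 0 := sub_ne_zero_of_ne fun h => hab h.symm
  have f7 : 1 - a * b⁻¹ ≠ 0 := sub_ne_zero_of_ne fun h => hab' h.symm
  have f2 : 1 - (a⁻¹) ^ 2 ≠ 0 := by
    rw [inv_pow]; intro h
    apply f1
    have h2 : (a ^ 2) * (1 - (a ^ 2)⁻¹) = 0 := by rw [h, mul_zero]
    rw [mul_sub, mul_one, mul_inv_cancel₀ (pow_ne_zero 2 ha0)] at h2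
    linear_combination -h2
  have f4 : 1 - (b⁻¹) ^ 2 ≠ 0 := by
    rw [inv_pow]; intro h
    apply f3
    have h2 : (b ^ 2) * (1 - (b ^ 2)⁻¹) = 0 := by rw [h, mul_zero]
    rw [mul_sub, mul_one, mul_inv_cancel₀ (pow_ne_zero 2 hb0)] at h2
    linear_combination -h2
  have f6 : 1 - (a * b)⁻¹ ≠ 0 := by
    intro h
    apply f5
    have h2 : (a * b) * (1 - (a * b)⁻¹) = 0 := by rw [h, mul_zero]
    rw [mul_sub, mul_one, mul_inv_cancel₀ (mul_ne_zero ha0 hb0)] at h2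
    linear_combination -h2
  have f8 : 1 - a⁻¹ * b ≠ 0 := by
    intro h
    have h2 : a * (1 - a⁻¹ * b) = 0 := by rw [h, mul_zero]
    rw [mul_sub, mul_one, ← mul_assoc, mul_inv_cancel₀ ha0, one_mul] at h2
    have hab2 : a = b := by linear_combination h2
    apply f7; rw [hab2, mul_inv_cancel₀ hb0, sub_self]
  have gTa : 4 - ta ^ 2 ≠ 0 := by
    rw [hta]; intro h
    apply f1
    have h2 : (a ^ 2) * (4 - (a + a⁻¹) ^ 2) = 0 := by rw [h, mul_zero]
    field_simp at h2
    have h3 : (1 - a ^ 2) ^ 2 = 0 := by linear_combination -h2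
    exact pow_eq_zero_iff (by norm_num) |>.mp h3
  have gTb : 4 - tb ^ 2 ≠ 0 := by
    rw [htb]; intro h
    apply f3
    have h2 : (b ^ 2) * (4 - (b + b⁻¹) ^ 2) = 0 := by rw [h, mul_zero]
    field_simp at h2
    have h3 : (1 - b ^ 2) ^ 2 = 0 := by linear_combination -h2
    exact pow_eq_zero_iff (by norm_num) |>.mp h3
  have gT : ta - tb ≠ 0 := by
    rw [hta, htb]; intro h
    have h2 : (a * b) * ((a + a⁻¹) - (b + b⁻¹)) = 0 := by rw [h, mul_zero]
    field_simp at h2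
    have h3 : (a - b) * (a * b - 1) = 0 := by linear_combination h2
    rcases mul_eq_zero.mp h3 with h4 | h4
    · rw [sub_eq_zero] at h4
      exact f7 (by rw [h4, mul_inv_cancel₀ hb0, sub_self])
    · exact f5 (by linear_combination -h4)
  obtain ⟨u, hu⟩ : ∃ u, a * u = 1 := ⟨a⁻¹, mul_inv_cancel₀ ha0⟩
  obtain ⟨v, hv⟩ : ∃ v, b * v = 1 := ⟨b⁻¹, mul_inv_cancel₀ hb0⟩
  obtain ⟨w, hw⟩ : ∃ w, (p:ℂ) * w = 1 := ⟨(p:ℂ)⁻¹, mul_inv_cancel₀ hp0⟩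
  have hau : a⁻¹ = u := inv_eq_of_mul_eq_one_right hu
  have hbv : b⁻¹ = v := inv_eq_of_mul_eq_one_right hv
  have hpw : ((p:ℂ))⁻¹ = w := inv_eq_of_mul_eq_one_right hw
  have hDl8 : (1 - a^2) * ((1 - (a⁻¹)^2) * ((1 - b^2) * ((1 - (b⁻¹)^2)
        * ((1 - a*b) * ((1 - (a*b)⁻¹) * ((1 - a*b⁻¹) * (1 - a⁻¹*b)))))))
      = (4 - ta^2) * ((4 - tb^2) * (ta - tb)^2) := by
    rw [hta, htb]
    simp only [mul_inv, hau, hbv]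
    linear_combination ((-7)*1 + (11)*v^2 + (-4)*v^4 + (22)*b*v + (-10)*b*v^3 + (11)*b^2 + (-13)*b^2*v^2 + (-10)*b^3*v + (2)*b^3*v^3 + (-4)*b^4 + (2)*b^4*v^4 + (-24)*u*v + (6)*u*v^3 + (-24)*u*b + (17)*u*b*v^2 + (1)*u*b*v^4 + (17)*u*b^2*v + (1)*u*b^2*v^3 + (6)*u*b^3 + (1)*u*b^3*v^2 + (-1)*u*b^3*v^4 + (1)*u*b^4*v + (-1)*u*b^4*v^3 + (16)*u^2 + (-5)*u^2*v^2 + (1)*u^2*v^4 + (-9)*u^2*b*v + (1)*u^2*b*v^3 + (-5)*u^2*b^2 + (1)*u^2*b^2*v^2 + (1)*u^2*b^3*v + (-1)*u^2*b^3*v^3 + (1)*u^2*b^4 + (-1)*u^2*b^4*v^4 + (1)*u^3*b*v^2 + (-1)*u^3*b*v^4 + (1)*u^3*b^2*v + (-1)*u^3*b^2*v^3 + (-1)*u^3*b^3*v^2 + (1)*u^3*b^3*v^4 + (-1)*u^3*b^4*v + (1)*u^3*b^4*v^3 + (-24)*a*v + (6)*a*v^3 + (-24)*a*b + (17)*a*b*v^2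 + (1)*a*b*v^4 + (17)*a*b^2*v + (1)*a*b^2*v^3 + (6)*a*b^3 + (1)*a*b^3*v^2 + (-1)*a*b^3*v^4 + (1)*a*b^4*v + (-1)*a*b^4*v^3 + (25)*a*u + (-6)*a*u*v^2 + (-1)*a*u*v^4 + (-12)*a*u*b*v + (-6)*a*u*b^2 + (1)*a*u*b^2*v^2 + (-1)*a*u*b^2*v^4 + (-1)*a*u*b^4 + (-1)*a*u*b^4*v^2 + (2)*a*u*b^4*v^4 + (-1)*a*u^2*v + (1)*a*u^2*v^3 + (-1)*a*u^2*b + (1)*a*u^2*b*v^2 + (1)*a*u^2*b^2*v + (-1)*a*u^2*b^2*v^3 + (1)*a*u^2*b^3 + (-1)*a*u^2*b^3*v^2 + (1)*a*u^3*b*v + (-1)*a*u^3*b*v^3 + (-1)*a*u^3*b^2*v^2 + (1)*a*u^3*b^2*v^4 + (-1)*a*u^3*b^3*v + (1)*a*u^3*b^3*v^3 + (1)*a*u^3*b^4*v^2 + (-1)*a*u^3*b^4*v^4 + (16)*a^2 + (-5)*a^2*v^2 + (1)*a^2*v^4 + (-9)*a^2*b*v + (1)*a^2*b*v^3 + (-5)*a^2*b^2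 + (1)*a^2*b^2*v^2 + (1)*a^2*b^3*v + (-1)*a^2*b^3*v^3 + (1)*a^2*b^4 + (-1)*a^2*b^4*v^4 + (-1)*a^2*u*v + (1)*a^2*u*v^3 + (-1)*a^2*u*b + (1)*a^2*u*b*v^2 + (1)*a^2*u*b^2*v + (-1)*a^2*u*b^2*v^3 + (1)*a^2*u*b^3 + (-1)*a^2*u*b^3*v^2 + (1)*a^2*u^2*v^2 + (-1)*a^2*u^2*v^4 + (2)*a^2*u^2*b*v + (-2)*a^2*u^2*b*v^3 + (1)*a^2*u^2*b^2 + (-1)*a^2*u^2*b^2*v^2 + (-2)*a^2*u^2*b^3*v + (2)*a^2*u^2*b^3*v^3 + (-1)*a^2*u^2*b^4 + (1)*a^2*u^2*b^4*v^4 + (-1)*a^2*u^3*b*v^2 + (1)*a^2*u^3*b*v^4 + (-1)*a^2*u^3*b^2*v + (1)*a^2*u^3*b^2*v^3 + (1)*a^2*u^3*b^3*v^2 + (-1)*a^2*u^3*b^3*v^4 + (1)*a^2*u^3*b^4*v + (-1)*a^2*u^3*b^4*v^3 + (1)*a^3*b*v^2 + (-1)*a^3*b*v^4 + (1)*a^3*b^2*v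 + (-1)*a^3*b^2*v^3 + (-1)*a^3*b^3*v^2 + (1)*a^3*b^3*v^4 + (-1)*a^3*b^4*v + (1)*a^3*b^4*v^3 + (1)*a^3*u*b*v + (-1)*a^3*u*b*v^3 + (-1)*a^3*u*b^2*v^2 + (1)*a^3*u*b^2*v^4 + (-1)*a^3*u*b^3*v + (1)*a^3*u*b^3*v^3 + (1)*a^3*u*b^4*v^2 + (-1)*a^3*u*b^4*v^4 + (-1)*a^3*u^2*b*v^2 + (1)*a^3*u^2*b*v^4 + (-1)*a^3*u^2*b^2*v + (1)*a^3*u^2*b^2*v^3 + (1)*a^3*u^2*b^3*v^2 + (-1)*a^3*u^2*b^3*v^4 + (1)*a^3*u^2*b^4*v + (-1)*a^3*u^2*b^4*v^3 + (1)*a^3*u^3*b^2*v^2 + (-1)*a^3*u^3*b^2*v^4 + (-1)*a^3*u^3*b^4*v^2 + (1)*a^3*u^3*b^4*v^4) * hu + ((6)*1 + (6)*v^2 + (16)*b*v + (6)*b^2 + (4)*b^2*v^2 + (2)*b^3*v^3 + (-7)*u*v + (1)*u*v^3 + (-7)*u*b + (-1)*u*b*v^2 + (-1)*u*b^2*v +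 (-1)*u*b^2*v^3 + (1)*u*b^3 + (-1)*u*b^3*v^2 + (1)*u^2 + (-4)*u^2*v^2 + (-7)*u^2*b*v + (-4)*u^2*b^2 + (-1)*u^2*b^2*v^2 + (-1)*u^2*b^3*v^3 + (7)*u^3*v + (-1)*u^3*v^3 + (7)*u^3*b + (1)*u^3*b*v^2 + (1)*u^3*b^2*v + (1)*u^3*b^2*v^3 + (-1)*u^3*b^3 + (1)*u^3*b^3*v^2 + (-4)*u^4 + (1)*u^4*v^2 + (-1)*u^4*b*v + (1)*u^4*b^2 + (-1)*u^4*b^2*v^2 + (-7)*a*v + (1)*a*v^3 + (-7)*a*b + (-1)*a*b*v^2 + (-1)*a*b^2*v + (-1)*a*b^2*v^3 + (1)*a*b^3 + (-1)*a*b^3*v^2 + (1)*a^2 + (-4)*a^2*v^2 + (-7)*a^2*b*v + (-4)*a^2*b^2 + (-1)*a^2*b^2*v^2 + (-1)*a^2*b^3*v^3 + (7)*a^3*v + (-1)*a^3*v^3 + (7)*a^3*b + (1)*a^3*b*v^2 + (1)*a^3*b^2*v + (1)*a^3*b^2*v^3 + (-1)*a^3*b^3 + (1)*a^3*b^3*v^2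 + (-4)*a^4 + (1)*a^4*v^2 + (-1)*a^4*b*v + (1)*a^4*b^2 + (-1)*a^4*b^2*v^2) * hv
  have hD' : (4 - ta^2) * ((4 - tb^2) * (ta - tb)^2) ≠ 0 :=
    mul_ne_zero gTa (mul_ne_zero gTb (pow_ne_zero 2 gT))
  have hDL : (1 - a^2) * ((1 - (a⁻¹)^2) * ((1 - b^2) * ((1 - (b⁻¹)^2)
      * ((1 - a*b) * ((1 - (a*b)⁻¹) * ((1 - a*b⁻¹) * (1 - a⁻¹*b))))))) ≠ 0 := by
    rw [hDl8]; exact hD'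
  have hDR : (ta - tb)^2 * ((4 - ta^2) * ((4 - tb^2) * (p:ℂ)^2)) ≠ 0 :=
    mul_ne_zero (pow_ne_zero 2 gT) (mul_ne_zero gTa (mul_ne_zero gTb (pow_ne_zero 2 hp0)))
  have L1 : 2 * ((1 - a^2)⁻¹ * (1 - (a⁻¹)^2)⁻¹ * (1 - b^2)⁻¹ * (1 - (b⁻¹)^2)⁻¹
        * (1 - a*b)⁻¹ * (1 - (a*b)⁻¹)⁻¹ * (1 - a*b⁻¹)⁻¹ * (1 - a⁻¹*b)⁻¹)
        * (q0 + q1 + q2 + q3 + q4 + q5 + q6)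
      = (2 * (q0 + q1 + q2 + q3 + q4 + q5 + q6)) /
        ((1 - a^2) * ((1 - (a⁻¹)^2) * ((1 - b^2) * ((1 - (b⁻¹)^2)
          * ((1 - a*b) * ((1 - (a*b)⁻¹) * ((1 - a*b⁻¹) * (1 - a⁻¹*b)))))))) := by
    rw [div_eq_mul_inv]
    simp only [mul_inv]
    ring
  have L2 : (2 * (q0 + q1 + q2 + q3 + q4 + q5 + q6)) /
        ((4 - ta^2) * ((4 - tb^2) * (ta - tb)^2))
      = (2 * (q0 + q1 + q2 + q3 + q4 + q5 + q6) * (p:ℂ)^2) /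
        ((ta - tb)^2 * ((4 - ta^2) * ((4 - tb^2) * (p:ℂ)^2))) := by
    rw [div_eq_div_iff hD' hDR]
    ring
  have key : 2 * (q0 + q1 + q2 + q3 + q4 + q5 + q6) * (p:ℂ)^2
      = 2 * (((4 - tb^2) + (4 - ta^2)) * ((p:ℂ) - 1)^2
          + 2 * (p:ℂ) * ((4 - ta^2) * (4 - tb^2))) := by
    subst hq0 hq1 hq2 hq3 hq4 hq5 hq6
    simp only [hpw]
    linear_combination ((16)*1 + (32)*p + (16)*p*w + (-2)*tb^2 + (-12)*tb^2*p + (-2)*tb^2*p*w + (-2)*ta^2 + (-12)*ta^2*p + (-2)*ta^2*p*w + (4)*ta^2*tb^2*p) * hw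
  rw [L1, hDl8, L2, key,
    aux_frac (4 - ta^2) (4 - tb^2) (ta - tb) (p:ℂ) gTa gTb gT hp0]
end

section
/- Let a, b be complex numbers of modulus 1 with (a-b)(a^2-1)(b^2-1)(ab-1) ≠ 0. Define A(ν) as the double geometric sum Σ_{0≤i≤ν} a^{ν-i} b^i Σ_{0≤j≤ν} (ab)^{-j}, and B(ν) = A(ν) · Σ_{j=1}^{⌊ν/2⌋} A(ν-2j). Then for |t| < 1, Σ_{ν=0}^{∞} (B(ν)/D(a,b)^2) t^{ν} = -2/(1-t) + (a^2/(a^2-1))·1/(1-a^2 t) - (1/(a^2-1))·1/(1-a^{-2} t) + (b^2/(b^2-1))·1/(1-b^2 t) - (1/(b^2-1))·1/(1-b^{-2} t) - ((a^3 b + a b^3 - 2ab)/((a^2-1)(b^2-1)))·1/(1-ab t) - ((ab^{-1} + a^{-1}b - 2ab)/((a^2-1)(b^2-1)))·1/(1-(ab)^{-1} t) + ((a^3 b + a b^{-1} - 2ab)/((a^2-1)(b^2-1)))·1/(1-ab^{-1} t) + ((a b^3 + a^{-1}b - 2ab)/((a^2-1)(b^2-1)))·1/(1-a^{-1}b t),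 where D(a,b) = ab/((a-b)(ab-1)). -/
open Finset

set_option maxHeartbeats 1600000 in
theorem statement12 (a b : ℂ) (ha : ‖a‖ = 1) (hb : ‖b‖ = 1)
    (h : (a - b) * (a^2 - 1) * (b^2 - 1) * (a*b - 1) ≠ 0)
    (D : ℂ) (hD : D = a*b / ((a - b) * (a*b - 1)))
    (A : ℕ → ℂ)
    (hA : ∀ ν : ℕ,
      A ν = (∑ i ∈ range (ν+1), a^(ν-i) * b^i) * (∑ j ∈ range (ν+1), ((a*b)⁻¹)^j))
    (B : ℕ → ℂ)
    (hB : ∀ ν : ℕ, B ν = A ν * ∑ j ∈ Icc 1 (ν / 2), A (ν - 2*j))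
    (t : ℂ) (ht : ‖t‖ < 1) :
    ∑' ν : ℕ, (B ν / D^2) * t^ν
      = -2 / (1 - t)
        + (a^2 / (a^2 - 1)) * (1 / (1 - a^2 * t))
        - (1 / (a^2 - 1)) * (1 / (1 - (a⁻¹)^2 * t))
        + (b^2 / (b^2 - 1)) * (1 / (1 - b^2 * t))
        - (1 / (b^2 - 1)) * (1 / (1 - (b⁻¹)^2 * t))
        - ((a^3 * b + a * b^3 - 2*a*b) / ((a^2 - 1) * (b^2 - 1))) * (1 / (1 - (a*b) * t))
        - ((a*b⁻¹ + a⁻¹*b - 2*a*b) / ((a^2 - 1) * (b^2 - 1))) * (1 / (1 - (a*b)⁻¹ * t))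
        + ((a^3 * b + a*b⁻¹ - 2*a*b) / ((a^2 - 1) * (b^2 - 1))) * (1 / (1 - (a*b⁻¹) * t))
        + ((a*b^3 + a⁻¹*b - 2*a*b) / ((a^2 - 1) * (b^2 - 1))) * (1 / (1 - (a⁻¹*b) * t)) := by
  -- basic nonvanishing facts
  have ha0 : a ≠ 0 := by intro h0; rw [h0] at ha; simp at ha
  have hb0 : b ≠ 0 := by intro h0; rw [h0] at hb; simp at hb
  have hab : a - b ≠ 0 := by intro h0; apply h; rw [h0]; ring
  have ha2 : a^2 - 1 ≠ 0 := by intro h0; apply h; rw [h0]; ring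
  have hb2 : b^2 - 1 ≠ 0 := by intro h0; apply h; rw [h0]; ring
  have hab1 : a*b - 1 ≠ 0 := by intro h0; apply h; rw [h0]; ring
  have hba : b - a ≠ 0 := fun h0 => hab (by linear_combination -h0)
  have hab0 : a*b ≠ 0 := mul_ne_zero ha0 hb0
  have hK0 : (a^2 - 1) * (b^2 - 1) ≠ 0 := mul_ne_zero ha2 hb2
  have hinv1 : (a*b)⁻¹ - 1 ≠ 0 := by
    intro h0
    apply hab1
    have h1 : (a*b)⁻¹ = 1 := by linear_combination h0
    have h2 := congrArg (· * (a*b)) h1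
    simp only [inv_mul_cancel₀ hab0, one_mul] at h2
    linear_combination -h2
  have hD0 : D ≠ 0 := by
    rw [hD]
    exact div_ne_zero hab0 (mul_ne_zero hab hab1)
  have hc0 : (b - a) * ((a*b)⁻¹ - 1) ≠ 0 := mul_ne_zero hba hinv1
  have hDone : D * ((b - a) * ((a*b)⁻¹ - 1)) = 1 := by
    rw [hD]
    field_simp [hab, hab1]
    ring
  -- closed form for A
  set P : ℕ → ℂ := fun ν => a^(ν+1) + (a⁻¹)^(ν+1) - b^(ν+1) - (b⁻¹)^(ν+1) with hPdef
  have hAc : ∀ ν : ℕ, A ν = D * P ν := by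
    intro ν
    apply mul_right_cancel₀ hc0
    have h1 : (∑ i ∈ range (ν+1), a^(ν-i) * b^i) * (b - a) = b^(ν+1) - a^(ν+1) := by
      have hg := geom_sum₂_mul b a (ν+1)
      rw [← hg]
      congr 1
      apply Finset.sum_congr rfl
      intro i hi
      simp only [Finset.mem_range] at hi
      have hi' : ν + 1 - 1 - i = ν - i := by omega
      rw [hi']; ring
    have h2 : (∑ j ∈ range (ν+1), ((a*b)⁻¹)^j) * ((a*b)⁻¹ - 1) = ((a*b)⁻¹)^(ν+1) - 1 :=
      geom_sum_mul _ _
    have hlhs : A ν * ((b - a) * ((a*b)⁻¹ - 1))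
        = (b^(ν+1) - a^(ν+1)) * (((a*b)⁻¹)^(ν+1) - 1) := by
      rw [hA ν, ← h1, ← h2]; ring
    have hrhs : D * P ν * ((b - a) * ((a*b)⁻¹ - 1)) = P ν := by
      calc D * P ν * ((b - a) * ((a*b)⁻¹ - 1))
          = P ν * (D * ((b - a) * ((a*b)⁻¹ - 1))) := by ring
        _ = P ν := by rw [hDone, mul_one]
    rw [hlhs, hrhs, hPdef]
    simp only [mul_inv, mul_pow, inv_pow]
    have hu : (a:ℂ)^(ν+1) ≠ 0 := pow_ne_zero _ ha0
    have hv : (b:ℂ)^(ν+1) ≠ 0 := pow_ne_zero _ hb0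
    generalize a^(ν+1) = u at hu ⊢
    generalize b^(ν+1) = v at hv ⊢
    field_simp [hu, hv]
    ring
  -- closed form (cleared of denominators) for the inner sum
  set W : ℕ → ℂ := fun ν =>
    (a*a^ν - a*(a⁻¹)^ν) * (b^2 - 1) - (b*b^ν - b*(b⁻¹)^ν) * (a^2 - 1) with hWdef
  have hIcc : ∀ (m : ℕ) (f : ℕ → ℂ), ∑ j ∈ Icc 1 m, f j = ∑ j ∈ range m, f (1+j) := by
    intro m f
    rw [← Finset.Ico_add_one_right_eq_Icc, Finset.sum_Ico_eq_sum_range]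
    simp
  have hS : ∀ ν : ℕ, (∑ j ∈ Icc 1 (ν / 2), A (ν - 2*j)) * ((a^2 - 1) * (b^2 - 1))
      = D * W ν := by
    intro ν
    induction ν using Nat.twoStepInduction with
    | zero =>
      simp only [hWdef, pow_zero, mul_one, Nat.zero_div, Finset.Icc_eq_empty_of_lt
        Nat.zero_lt_one, Finset.sum_empty, zero_mul]
      ring
    | one =>
      have hd : (1:ℕ)/2 = 0 := rfl
      rw [hd]
      simp only [Finset.Icc_eq_empty_of_lt Nat.zero_lt_one, Finset.sum_empty, zero_mul,
        hWdef, pow_one]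
      linear_combination D*(b^2-1)*(mul_inv_cancel₀ ha0) - D*(a^2-1)*(mul_inv_cancel₀ hb0)
    | more n ih _ =>
      have hdiv : (n+2)/2 = n/2 + 1 := by omega
      rw [hdiv, hIcc, Finset.sum_range_succ']
      have e0 : n + 2 - 2*(1+0) = n := by omega
      have e2 : ∑ i ∈ range (n/2), A (n + 2 - 2*(1+(i+1)))
          = ∑ i ∈ range (n/2), A (n - 2*(1+i)) := by
        apply Finset.sum_congr rfl
        intro i _
        congr 1
        omega
      rw [e0, e2, add_mul, ← hIcc (n/2) (fun j => A (n - 2*j)), ih, hAc n]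
      have hw : W (n+2) = W n + P n * ((a^2 - 1) * (b^2 - 1)) := by
        simp only [hWdef, hPdef, inv_pow, pow_add, pow_one]
        have hu : (a:ℂ)^n ≠ 0 := pow_ne_zero _ ha0
        have hv : (b:ℂ)^n ≠ 0 := pow_ne_zero _ hb0
        generalize a^n = u at hu ⊢
        generalize b^n = v at hv ⊢
        field_simp [hu, hv, ha0, hb0]
        ring
      rw [hw]
      ring
  -- pointwise formula for B ν / D^2
  have hBD : ∀ ν : ℕ, B ν / D^2 = P ν * W ν / ((a^2 - 1) * (b^2 - 1)) := by
    intro ν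
    rw [hB ν, hAc ν, div_eq_div_iff (pow_ne_zero 2 hD0) hK0]
    linear_combination D * P ν * hS ν
  have key : ∀ ν : ℕ, P ν * W ν
      = (-2*((a^2-1)*(b^2-1))) * (1:ℂ)^ν
        + (a^2*(b^2-1)) * (a^2)^ν
        + (-(b^2-1)) * ((a⁻¹)^2)^ν
        + (b^2*(a^2-1)) * (b^2)^ν
        + (-(a^2-1)) * ((b⁻¹)^2)^ν
        + (-(a^3*b + a*b^3 - 2*a*b)) * (a*b)^ν
        + (-(a*b⁻¹ + a⁻¹*b - 2*a*b)) * ((a*b)⁻¹)^ν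
        + (a^3*b + a*b⁻¹ - 2*a*b) * (a*b⁻¹)^ν
        + (a*b^3 + a⁻¹*b - 2*a*b) * (a⁻¹*b)^ν := by
    intro ν
    have ra : (a^2)^ν = (a^ν)^2 := by rw [← pow_mul, ← pow_mul, Nat.mul_comm]
    have rb : (b^2)^ν = (b^ν)^2 := by rw [← pow_mul, ← pow_mul, Nat.mul_comm]
    have ra' : ((a⁻¹)^2)^ν = ((a⁻¹)^ν)^2 := by rw [← pow_mul, ← pow_mul, Nat.mul_comm]
    have rb' : ((b⁻¹)^2)^ν = ((b⁻¹)^ν)^2 := by rw [← pow_mul, ← pow_mul, Nat.mul_comm]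
    simp only [hPdef, hWdef, mul_inv, mul_pow, pow_succ, one_pow, ra, rb, ra', rb']
    have hu' : a^ν * (a⁻¹)^ν = 1 := by rw [← mul_pow, mul_inv_cancel₀ ha0, one_pow]
    have hv' : b^ν * (b⁻¹)^ν = 1 := by rw [← mul_pow, mul_inv_cancel₀ hb0, one_pow]
    have haa : a * a⁻¹ = 1 := mul_inv_cancel₀ ha0
    have hbb : b * b⁻¹ = 1 := mul_inv_cancel₀ hb0
    linear_combination
      (-(a*a⁻¹) + a*b^2*a⁻¹ + a^2 - a^2*b^2) * hu'
      + (-(b*b⁻¹) + b^2 + a^2*b*b⁻¹ - a^2*b^2) * hv'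
      + (-1 + ((a⁻¹)^ν)^2 + b^2 - b^2*((a⁻¹)^ν)^2
          + a*b*(a⁻¹)^ν*(b⁻¹)^ν - a*b*(b^ν)*(a⁻¹)^ν) * haa
      + (-1 + ((b⁻¹)^ν)^2 + a*b*(a⁻¹)^ν*(b⁻¹)^ν - a*b*(a^ν)*(b⁻¹)^ν
          + a^2 - a^2*((b⁻¹)^ν)^2) * hbb
  -- geometric series machinery
  have hnorm : ∀ r : ℂ, ‖r‖ = 1 → ‖r * t‖ < 1 := by
    intro r hr
    rw [norm_mul, hr, one_mul]; exact ht
  have hsummable : ∀ (c r : ℂ), ‖r‖ = 1 → Summable (fun ν : ℕ => c * (r*t)^ν) := by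
    intro c r hr
    exact (summable_geometric_of_norm_lt_one (hnorm r hr)).mul_left c
  have htsum : ∀ (c r : ℂ), ‖r‖ = 1 → ∑' ν : ℕ, c * (r*t)^ν = c * (1 - r*t)⁻¹ := by
    intro c r hr
    rw [tsum_mul_left, tsum_geometric_of_norm_lt_one (hnorm r hr)]
  have n1 : ‖(1:ℂ)‖ = 1 := by simp
  have na2 : ‖a^2‖ = 1 := by rw [norm_pow, ha, one_pow]
  have nai2 : ‖(a⁻¹)^2‖ = 1 := by rw [norm_pow, norm_inv, ha]; norm_num
  have nb2 : ‖b^2‖ = 1 := by rw [norm_pow, hb, one_pow]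
  have nbi2 : ‖(b⁻¹)^2‖ = 1 := by rw [norm_pow, norm_inv, hb]; norm_num
  have nab : ‖a*b‖ = 1 := by rw [norm_mul, ha, hb, one_mul]
  have nabi : ‖(a*b)⁻¹‖ = 1 := by rw [norm_inv, nab]; norm_num
  have nabinv : ‖a*b⁻¹‖ = 1 := by rw [norm_mul, norm_inv, ha, hb]; norm_num
  have nainvb : ‖a⁻¹*b‖ = 1 := by rw [norm_mul, norm_inv, ha, hb]; norm_num
  set K : ℂ := (a^2 - 1) * (b^2 - 1) with hK
  set c1 : ℂ := (-2*K) / K with hc1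
  set c2 : ℂ := (a^2*(b^2-1)) / K with hc2
  set c3 : ℂ := (-(b^2-1)) / K with hc3
  set c4 : ℂ := (b^2*(a^2-1)) / K with hc4
  set c5 : ℂ := (-(a^2-1)) / K with hc5
  set c6 : ℂ := (-(a^3*b + a*b^3 - 2*a*b)) / K with hc6
  set c7 : ℂ := (-(a*b⁻¹ + a⁻¹*b - 2*a*b)) / K with hc7
  set c8 : ℂ := (a^3*b + a*b⁻¹ - 2*a*b) / K with hc8
  set c9 : ℂ := (a*b^3 + a⁻¹*b - 2*a*b) / K with hc9
  have s1 := hsummable c1 1 n1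
  have s2 := hsummable c2 (a^2) na2
  have s3 := hsummable c3 ((a⁻¹)^2) nai2
  have s4 := hsummable c4 (b^2) nb2
  have s5 := hsummable c5 ((b⁻¹)^2) nbi2
  have s6 := hsummable c6 (a*b) nab
  have s7 := hsummable c7 ((a*b)⁻¹) nabi
  have s8 := hsummable c8 (a*b⁻¹) nabinv
  have s9 := hsummable c9 (a⁻¹*b) nainvb
  have hfun : ∀ ν : ℕ, (B ν / D^2) * t^ν
      = c1 * ((1:ℂ)*t)^ν + (c2 * (a^2*t)^ν + (c3 * ((a⁻¹)^2*t)^ν + (c4 * (b^2*t)^ν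
        + (c5 * ((b⁻¹)^2*t)^ν + (c6 * ((a*b)*t)^ν + (c7 * ((a*b)⁻¹*t)^ν
        + (c8 * ((a*b⁻¹)*t)^ν + c9 * ((a⁻¹*b)*t)^ν))))))) := by
    intro ν
    rw [hBD ν, key ν]
    simp only [hc1, hc2, hc3, hc4, hc5, hc6, hc7, hc8, hc9, hK, mul_pow]
    ring
  calc ∑' ν : ℕ, (B ν / D^2) * t^ν
      = ∑' ν : ℕ, (c1 * ((1:ℂ)*t)^ν + (c2 * (a^2*t)^ν + (c3 * ((a⁻¹)^2*t)^ν
        + (c4 * (b^2*t)^ν + (c5 * ((b⁻¹)^2*t)^ν + (c6 * ((a*b)*t)^ν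
        + (c7 * ((a*b)⁻¹*t)^ν + (c8 * ((a*b⁻¹)*t)^ν + c9 * ((a⁻¹*b)*t)^ν)))))))) := by
        exact tsum_congr hfun
    _ = c1 * (1 - (1:ℂ)*t)⁻¹ + (c2 * (1 - a^2*t)⁻¹ + (c3 * (1 - (a⁻¹)^2*t)⁻¹
        + (c4 * (1 - b^2*t)⁻¹ + (c5 * (1 - (b⁻¹)^2*t)⁻¹ + (c6 * (1 - (a*b)*t)⁻¹
        + (c7 * (1 - (a*b)⁻¹*t)⁻¹ + (c8 * (1 - (a*b⁻¹)*t)⁻¹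
        + c9 * (1 - (a⁻¹*b)*t)⁻¹))))))) := by
        rw [Summable.tsum_add s1 (s2.add (s3.add (s4.add (s5.add (s6.add (s7.add (s8.add s9))))))),
          Summable.tsum_add s2 (s3.add (s4.add (s5.add (s6.add (s7.add (s8.add s9)))))),
          Summable.tsum_add s3 (s4.add (s5.add (s6.add (s7.add (s8.add s9))))),
          Summable.tsum_add s4 (s5.add (s6.add (s7.add (s8.add s9)))),
          Summable.tsum_add s5 (s6.add (s7.add (s8.add s9))),
          Summable.tsum_add s6 (s7.add (s8.add s9)),
          Summable.tsum_add s7 (s8.add s9),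
          Summable.tsum_add s8 s9,
          htsum c1 1 n1, htsum c2 (a^2) na2, htsum c3 ((a⁻¹)^2) nai2,
          htsum c4 (b^2) nb2, htsum c5 ((b⁻¹)^2) nbi2, htsum c6 (a*b) nab,
          htsum c7 ((a*b)⁻¹) nabi, htsum c8 (a*b⁻¹) nabinv, htsum c9 (a⁻¹*b) nainvb]
    _ = _ := by
        have q1 : c1 = -2 := by rw [hc1, mul_div_assoc, div_self hK0, mul_one]
        have q2 : c2 = a^2 / (a^2-1) := by
          rw [hc2, div_eq_div_iff hK0 ha2]; ring
        have q3 : c3 = -(1 / (a^2-1)) := by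
          rw [hc3, neg_div, neg_inj, div_eq_div_iff hK0 ha2]; ring
        have q4 : c4 = b^2 / (b^2-1) := by
          rw [hc4, div_eq_div_iff hK0 hb2]; ring
        have q5 : c5 = -(1 / (b^2-1)) := by
          rw [hc5, neg_div, neg_inj, div_eq_div_iff hK0 hb2]; ring
        rw [q1, q2, q3, q4, q5, hc6, hc7, hc8, hc9, hK]
        ring
end

section
/- Let f : [2, ∞) → ℝ be defined by f(t) = Σ_{p ≤ t, p prime, p ∈ S} log p for a set S of primes, and suppose f(t) ≥ t/32 - C·t·e^{-c√(log t)} for all t ≥ 2 and some constants C, c > 0. Then there exists a constant C' (depending on C, c) such that Σ_{p ≤ x, p ∈ S} 1/p ≥ (1/32) log log x - C' for all x ≥ 3. -/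
open Classical
open Finset


noncomputable def aS (S : Set ℕ) (n : ℕ) : ℝ :=
  if Nat.Prime n ∧ n ∈ S then Real.log n else 0

noncomputable def gg (n : ℕ) : ℝ := ((n:ℝ) * Real.log n)⁻¹

noncomputable def FF (S : Set ℕ) (n : ℕ) : ℝ := ∑ m ∈ Finset.Icc 1 n, aS S m

lemma cast_two_le {k : ℕ} (hk : 2 ≤ k) : (2:ℝ) ≤ (k:ℝ) := by exact_mod_cast hk

lemma lognat_pos {k : ℕ} (hk : 2 ≤ k) : 0 < Real.log k :=
  Real.log_pos (by linarith [cast_two_le hk])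

lemma mul_log_le_mul_log {s t : ℝ} (h1 : 1 ≤ s) (h : s ≤ t) :
    s * Real.log s ≤ t * Real.log t :=
  mul_le_mul h (Real.log_le_log (by linarith) h) (Real.log_nonneg h1) (by linarith)

lemma log_pos_of_three {t : ℝ} (ht : 3 ≤ t) : 0 < Real.log t :=
  Real.log_pos (by linarith)

lemma log_pos_of_two {t : ℝ} (ht : 2 ≤ t) : 0 < Real.log t :=
  Real.log_pos (by linarith)

lemma anti1 (n : ℕ) : AntitoneOn (fun t : ℝ => (t * Real.log t)⁻¹)
    (Set.Icc 3 (3 + (n:ℕ))) := by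
  intro s hs t ht hst
  have hs3 : (3:ℝ) ≤ s := hs.1
  have hpos : 0 < s * Real.log s := by
    have := log_pos_of_three hs3
    positivity
  exact inv_anti₀ hpos (mul_log_le_mul_log (by linarith) hst)

lemma integ1 (n : ℕ) :
    ∫ t in (3:ℝ)..(3 + (n:ℕ)), (t * Real.log t)⁻¹
      = Real.log (Real.log (3 + (n:ℕ))) - Real.log (Real.log 3) := by
  have hn : (3:ℝ) ≤ 3 + (n:ℕ) := le_add_of_nonneg_right (Nat.cast_nonneg n)
  apply intervalIntegral.integral_eq_sub_of_hasDerivAt (f := fun t => Real.log (Real.log t))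
  · intro t ht
    rw [Set.uIcc_of_le hn] at ht
    have ht3 : (3:ℝ) ≤ t := ht.1
    have ht0 : (0:ℝ) < t := by linarith
    have hlt : 0 < Real.log t := log_pos_of_three ht3
    have h1 : HasDerivAt Real.log t⁻¹ t := by
      simpa using Real.hasDerivAt_log (ne_of_gt ht0)
    have h2 := h1.log (ne_of_gt hlt)
    rw [show (t * Real.log t)⁻¹ = t⁻¹ / Real.log t by rw [mul_inv, div_eq_mul_inv]]
    exact h2
  · apply ContinuousOn.intervalIntegrable
    apply ContinuousOn.inv₀
    · exact (continuousOn_id.mul (Real.continuousOn_log.mono (by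
        intro t ht
        rw [Set.uIcc_of_le hn] at ht
        have : (3:ℝ) ≤ t := ht.1
        simp only [Set.mem_compl_iff, Set.mem_singleton_iff]
        intro h; rw [h] at this; norm_num at this)))
    · intro t ht
      rw [Set.uIcc_of_le hn] at ht
      have ht3 : (3:ℝ) ≤ t := ht.1
      have := log_pos_of_three ht3
      have : 0 < t * Real.log t := by positivity
      exact ne_of_gt this

lemma I1 (n : ℕ) :
    Real.log (Real.log (3 + (n:ℕ))) - Real.log (Real.log 3)
      ≤ ∑ i ∈ Finset.range n, ((3 + (i:ℝ)) * Real.log (3 + (i:ℝ)))⁻¹ := by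
  have h := AntitoneOn.integral_le_sum (f := fun t : ℝ => (t * Real.log t)⁻¹)
    (x₀ := 3) (a := n) (anti1 n)
  rw [integ1 n] at h
  exact h

lemma anti2 (n : ℕ) : AntitoneOn (fun t : ℝ => (t * Real.log t ^ 2)⁻¹)
    (Set.Icc 2 (2 + (n:ℕ))) := by
  intro s hs t ht hst
  have hs2 : (2:ℝ) ≤ s := hs.1
  have hls := log_pos_of_two hs2
  have hpos : 0 < s * Real.log s ^ 2 := by positivity
  apply inv_anti₀ hpos
  apply mul_le_mul hst _ (by positivity) (by linarith)
  have := Real.log_le_log (by linarith : (0:ℝ) < s) hst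
  exact pow_le_pow_left₀ (le_of_lt hls) this 2

lemma integ2 (n : ℕ) :
    ∫ t in (2:ℝ)..(2 + (n:ℕ)), (t * Real.log t ^ 2)⁻¹
      = (Real.log 2)⁻¹ - (Real.log (2 + (n:ℕ)))⁻¹ := by
  have hn : (2:ℝ) ≤ 2 + (n:ℕ) := le_add_of_nonneg_right (Nat.cast_nonneg n)
  have : ∫ t in (2:ℝ)..(2 + (n:ℕ)), (t * Real.log t ^ 2)⁻¹
      = (fun t => -(Real.log t)⁻¹) (2 + (n:ℕ)) - (fun t => -(Real.log t)⁻¹) 2 := by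
    apply intervalIntegral.integral_eq_sub_of_hasDerivAt (f := fun t => -(Real.log t)⁻¹)
    · intro t ht
      rw [Set.uIcc_of_le hn] at ht
      have ht2 : (2:ℝ) ≤ t := ht.1
      have ht0 : (0:ℝ) < t := by linarith
      have hlt := log_pos_of_two ht2
      have h1 : HasDerivAt Real.log t⁻¹ t := by
        simpa using Real.hasDerivAt_log (ne_of_gt ht0)
      have h2 := (h1.inv (ne_of_gt hlt)).neg
      convert h2 using 1
      · funext x; simp
      · field_simp
    · apply ContinuousOn.intervalIntegrable
      apply ContinuousOn.inv₀
      · apply ContinuousOn.mul continuousOn_id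
        apply ContinuousOn.pow
        apply Real.continuousOn_log.mono
        intro t ht
        rw [Set.uIcc_of_le hn] at ht
        have : (2:ℝ) ≤ t := ht.1
        simp only [Set.mem_compl_iff, Set.mem_singleton_iff]
        intro h; rw [h] at this; norm_num at this
      · intro t ht
        rw [Set.uIcc_of_le hn] at ht
        have ht2 : (2:ℝ) ≤ t := ht.1
        have := log_pos_of_two ht2
        have : 0 < t * Real.log t ^ 2 := by positivity
        exact ne_of_gt this
  rw [this]; ring

lemma I2 (n : ℕ) :
    ∑ i ∈ Finset.range n, ((2 + ((i:ℝ)+1)) * Real.log (2 + ((i:ℝ)+1)) ^ 2)⁻¹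
      ≤ (Real.log 2)⁻¹ := by
  have h := AntitoneOn.sum_le_integral (f := fun t : ℝ => (t * Real.log t ^ 2)⁻¹)
    (x₀ := 2) (a := n) (anti2 n)
  rw [integ2 n] at h
  have h2 : (0:ℝ) < Real.log (2 + (n:ℕ)) :=
    log_pos_of_two (le_add_of_nonneg_right (Nat.cast_nonneg n))
  have h3 : (Real.log 2)⁻¹ - (Real.log (2 + (n:ℕ)))⁻¹ ≤ (Real.log 2)⁻¹ := by
    have : 0 < (Real.log (2 + (n:ℕ)))⁻¹ := by positivity
    linarith
  refine le_trans ?_ (le_trans h h3)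
  apply le_of_eq
  apply Finset.sum_congr rfl
  intro i _
  push_cast
  ring_nf

lemma gg_pos {k : ℕ} (hk : 2 ≤ k) : 0 < gg k := by
  have h1 := lognat_pos hk
  have h2 : (0:ℝ) < k := by linarith [cast_two_le hk]
  unfold gg; positivity

lemma gg_succ_le {k : ℕ} (hk : 2 ≤ k) : gg (k+1) ≤ gg k := by
  unfold gg
  have h1 := lognat_pos hk
  have h2 : (0:ℝ) < k := by linarith [cast_two_le hk]
  apply inv_anti₀ (by positivity)
  have : ((k:ℝ)) ≤ ((k:ℝ)+1) := by linarith
  push_cast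
  exact mul_le_mul this (Real.log_le_log h2 this) (le_of_lt h1) (by linarith)

lemma key_alg {k : ℕ} (hk : 2 ≤ k) :
    (k:ℝ) * (gg k - gg (k+1))
      = ((Real.log k)⁻¹ - (Real.log (k+1:ℕ))⁻¹) + gg (k+1) := by
  unfold gg
  have h1 := (lognat_pos hk).ne'
  have h1' := (lognat_pos (by omega : 2 ≤ k+1)).ne'
  have h2 : ((k:ℝ)) ≠ 0 := by positivity
  have h2' : (((k+1:ℕ)):ℝ) ≠ 0 := by positivity
  push_cast at *
  field_simp
  ring

lemma dpos {k : ℕ} (hk : 2 ≤ k) :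
    0 ≤ (Real.log k)⁻¹ - (Real.log (k+1:ℕ))⁻¹ := by
  have h1 := lognat_pos hk
  have h1' := lognat_pos (by omega : 2 ≤ k+1)
  have h : Real.log k ≤ Real.log (k+1:ℕ) := by
    apply Real.log_le_log (by linarith [cast_two_le hk])
    push_cast; linarith
  have := inv_anti₀ h1 h
  linarith

lemma exp_bound {c : ℝ} (hc : 0 < c) {k : ℕ} (hk : 2 ≤ k) :
    Real.exp (-c * Real.sqrt (Real.log k)) ≤ 4 / (c^2 * Real.log k) := by
  have hl := lognat_pos hk
  set v := c * Real.sqrt (Real.log k) with hv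
  have hvpos : 0 < v := by
    apply mul_pos hc (Real.sqrt_pos.mpr hl)
  have hexp : v^2/4 ≤ Real.exp v := by
    have h1 : Real.exp (v/2) ^ 2 = Real.exp v := by
      rw [← Real.exp_nat_mul]; norm_num; ring_nf
    have h2 : v/2 ≤ Real.exp (v/2) := by
      have := Real.add_one_le_exp (v/2); linarith
    calc v^2/4 = (v/2)^2 := by ring
    _ ≤ Real.exp (v/2)^2 := by
        apply pow_le_pow_left₀ (by linarith) h2
    _ = Real.exp v := h1
  have hv2 : v^2 = c^2 * Real.log k := by
    rw [hv, mul_pow, Real.sq_sqrt (le_of_lt hl)]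
  have hden : 0 < c^2 * Real.log k := by positivity
  have h3 : (Real.exp v)⁻¹ ≤ (v^2/4)⁻¹ := inv_anti₀ (by positivity) hexp
  rw [show -c * Real.sqrt (Real.log k) = -v by rw [hv]; ring, Real.exp_neg]
  calc (Real.exp v)⁻¹ ≤ (v^2/4)⁻¹ := h3
  _ = 4 / (c^2 * Real.log k) := by rw [← hv2]; field_simp

lemma abel_aux (a g : ℕ → ℝ) (ha1 : a 1 = 0) :
    ∀ N, 2 ≤ N → ∑ n ∈ Icc 1 N, a n * g n
      = (∑ m ∈ Icc 1 N, a m) * g N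
        + ∑ k ∈ Icc 2 (N-1), (∑ m ∈ Icc 1 k, a m) * (g k - g (k+1)) := by
  intro N hN
  induction N, hN using Nat.le_induction with
  | base =>
    have h1 : Finset.Icc 1 2 = {1, 2} := by decide
    have h2 : Finset.Icc 2 1 = (∅ : Finset ℕ) := by decide
    simp [h1, h2, ha1]
  | succ N hN ih =>
    have hN1 : N - 1 + 1 = N := by omega
    have e1 : ∑ n ∈ Icc 1 (N+1), a n * g n
        = (∑ n ∈ Icc 1 N, a n * g n) + a (N+1) * g (N+1) :=
      Finset.sum_Icc_succ_top (by omega) _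
    have e2 : ∑ m ∈ Icc 1 (N+1), a m = (∑ m ∈ Icc 1 N, a m) + a (N+1) :=
      Finset.sum_Icc_succ_top (by omega) _
    have e3 : ∑ k ∈ Icc 2 ((N+1)-1), (∑ m ∈ Icc 1 k, a m) * (g k - g (k+1))
        = (∑ k ∈ Icc 2 (N-1), (∑ m ∈ Icc 1 k, a m) * (g k - g (k+1)))
          + (∑ m ∈ Icc 1 N, a m) * (g N - g (N+1)) := by
      have h4 : (N+1) - 1 = (N-1) + 1 := by omega
      rw [h4]
      rw [Finset.sum_Icc_succ_top (by omega)]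
      rw [hN1]
    rw [e1, ih, e2, e3]
    ring

lemma tele {M : ℕ} (hM : 1 ≤ M) :
    ∑ k ∈ Icc 2 M, ((Real.log k)⁻¹ - (Real.log (k+1:ℕ))⁻¹)
      = (Real.log 2)⁻¹ - (Real.log (M+1:ℕ))⁻¹ := by
  rw [← Finset.Ico_add_one_right_eq_Icc, Finset.sum_Ico_eq_sum_range]
  have h : M + 1 - 2 = M - 1 := by omega
  rw [h]
  have h2 := Finset.sum_range_sub' (fun i => (Real.log ((2+i:ℕ)):ℝ)⁻¹) (M-1)
  simp only [Nat.add_assoc]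
  have h3 : 2 + (M - 1) = M + 1 := by omega
  rw [h3] at h2
  rw [h2]
  norm_num

lemma reindex_gg {N : ℕ} (hN : 3 ≤ N) :
    ∑ k ∈ Icc 2 (N-1), gg (k+1) = ∑ m ∈ Icc 3 N, gg m := by
  rw [← Finset.Ico_add_one_right_eq_Icc, ← Finset.Ico_add_one_right_eq_Icc, Finset.sum_Ico_eq_sum_range,
    Finset.sum_Ico_eq_sum_range]
  have h1 : N - 1 + 1 - 2 = N - 2 := by omega
  have h2 : N + 1 - 3 = N - 2 := by omega
  rw [h1, h2]
  apply Finset.sum_congr rfl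
  intro i _
  congr 1
  omega

lemma sum_inv_klog2 {M : ℕ} (hM : 2 ≤ M) :
    ∑ k ∈ Icc 2 M, ((k:ℝ) * Real.log k ^ 2)⁻¹
      ≤ (2 * Real.log 2 ^ 2)⁻¹ + (Real.log 2)⁻¹ := by
  rw [← Finset.Ico_add_one_right_eq_Icc, Finset.sum_eq_sum_Ico_succ_bot (by omega)]
  apply add_le_add
  · norm_num
  · rw [Finset.sum_Ico_eq_sum_range]
    have h1 : M + 1 - 3 = M - 2 := by omega
    rw [h1]
    refine le_trans (le_of_eq ?_) (I2 (M-2))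
    apply Finset.sum_congr rfl
    intro i _
    have e : (((3+i:ℕ)):ℝ) = 2 + ((i:ℝ)+1) := by push_cast; ring
    rw [e]

lemma sum_gg_ge {N : ℕ} (hN : 3 ≤ N) :
    Real.log (Real.log ((N+1:ℕ))) - Real.log (Real.log 3) ≤ ∑ m ∈ Icc 3 N, gg m := by
  have h := I1 (N-2)
  have e : (3:ℝ) + ((N-2:ℕ):ℝ) = ((N+1:ℕ):ℝ) := by
    have h2 : (((N-2:ℕ)):ℝ) = (N:ℝ) - 2 := by
      push_cast [Nat.cast_sub (by omega : 2 ≤ N)]; ring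
    rw [h2]; push_cast; ring
  rw [e] at h
  refine h.trans (le_of_eq ?_)
  rw [← Finset.Ico_add_one_right_eq_Icc, Finset.sum_Ico_eq_sum_range]
  have h3 : N + 1 - 3 = N - 2 := by omega
  rw [h3]
  apply Finset.sum_congr rfl
  intro i _
  unfold gg
  have e2 : (((3+i:ℕ)):ℝ) = 3 + (i:ℝ) := by push_cast; ring
  rw [e2]

lemma conv_sum (S : Set ℕ) (M : ℕ) :
    ∑ p ∈ (Finset.Icc 1 M).filter (fun p => p.Prime ∧ p ∈ S), (1:ℝ)/p
      = ∑ n ∈ Icc 1 M, aS S n * gg n := by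
  rw [Finset.sum_filter]
  apply Finset.sum_congr rfl
  intro n _
  unfold aS gg
  by_cases h : n.Prime ∧ n ∈ S
  · rw [if_pos h, if_pos h]
    have h2 : 2 ≤ n := h.1.two_le
    have hl := (lognat_pos h2).ne'
    have hn0 : ((n:ℝ)) ≠ 0 := by
      have := cast_two_le h2; intro h'; rw [h'] at this; norm_num at this
    field_simp
  · rw [if_neg h, if_neg h, zero_mul]

lemma FF_eq (S : Set ℕ) (k : ℕ) :
    FF S k = ∑ p ∈ (Finset.Icc 1 k).filter (fun p => p.Prime ∧ p ∈ S), Real.log p := by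
  rw [Finset.sum_filter]
  rfl

theorem statement14 (S : Set ℕ) (hS : ∀ p ∈ S, Nat.Prime p) (C c : ℝ)
    (hC : 0 < C) (hc : 0 < c)
    (hf : ∀ t : ℝ, 2 ≤ t →
      ∑ p ∈ (Finset.Icc 1 ⌊t⌋₊).filter (fun p => p.Prime ∧ p ∈ S), Real.log p
        ≥ t / 32 - C * t * Real.exp (-c * Real.sqrt (Real.log t))) :
    ∃ C' : ℝ, ∀ x : ℝ, 3 ≤ x →
      ∑ p ∈ (Finset.Icc 1 ⌊x⌋₊).filter (fun p => p.Prime ∧ p ∈ S), (1 : ℝ) / p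
        ≥ (1 / 32) * Real.log (Real.log x) - C' := by
  have hlog2 : (0:ℝ) < Real.log 2 := Real.log_pos (by norm_num)
  refine ⟨(1/32) * Real.log (Real.log 3)
    + C * (2*(Real.log 2)⁻¹ + (4/c^2) * ((2*Real.log 2^2)⁻¹ + (Real.log 2)⁻¹)), ?_⟩
  intro x hx
  set N := ⌊x⌋₊ with hNdef
  have hN3 : 3 ≤ N := Nat.le_floor (by exact_mod_cast hx)
  have hN2 : 2 ≤ N := by omega
  have ha1 : aS S 1 = 0 := by simp [aS, Nat.not_prime_one]
  have habel : (∑ n ∈ Icc 1 N, aS S n * gg n)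
      = FF S N * gg N + ∑ k ∈ Icc 2 (N-1), FF S k * (gg k - gg (k+1)) :=
    abel_aux (aS S) gg ha1 N hN2
  rw [ge_iff_le, conv_sum S N, habel]
  have hFF : ∀ k : ℕ, 2 ≤ k →
      (k:ℝ)/32 - C*(k:ℝ)*Real.exp (-c*Real.sqrt (Real.log (k:ℝ))) ≤ FF S k := by
    intro k hk
    have h := hf (k:ℝ) (cast_two_le hk)
    rw [Nat.floor_natCast] at h
    rw [FF_eq]
    exact h
  -- boundary term
  have hb : -(C * (Real.log 2)⁻¹) ≤ FF S N * gg N := by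
    have hg := gg_pos hN2
    have h2 : ((N:ℝ)/32 - C*(N:ℝ)*Real.exp (-c*Real.sqrt (Real.log (N:ℝ)))) * gg N
        ≤ FF S N * gg N := mul_le_mul_of_nonneg_right (hFF N hN2) hg.le
    refine le_trans ?_ h2
    have hlogN := lognat_pos hN2
    have hN0 : ((N:ℝ)) ≠ 0 := by
      have := cast_two_le hN2; intro h'; rw [h'] at this; norm_num at this
    have hl0 : Real.log (N:ℝ) ≠ 0 := hlogN.ne'
    have e : ((N:ℝ)/32 - C*(N:ℝ)*Real.exp (-c*Real.sqrt (Real.log (N:ℝ)))) * gg N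
        = (1/32)*(Real.log (N:ℝ))⁻¹
          - C*Real.exp (-c*Real.sqrt (Real.log (N:ℝ)))*(Real.log (N:ℝ))⁻¹ := by
      unfold gg
      field_simp
    rw [e]
    have hE1 : Real.exp (-c*Real.sqrt (Real.log (N:ℝ))) ≤ 1 := by
      rw [← Real.exp_zero]
      apply Real.exp_le_exp.mpr
      have : 0 ≤ Real.sqrt (Real.log (N:ℝ)) := Real.sqrt_nonneg _
      nlinarith
    have hE0 : (0:ℝ) ≤ Real.exp (-c*Real.sqrt (Real.log (N:ℝ))) := (Real.exp_pos _).le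
    have hinv : (Real.log (N:ℝ))⁻¹ ≤ (Real.log 2)⁻¹ :=
      inv_anti₀ hlog2 (Real.log_le_log (by norm_num) (cast_two_le hN2))
    have hinv0 : (0:ℝ) ≤ (Real.log (N:ℝ))⁻¹ := by positivity
    have h4 : Real.exp (-c*Real.sqrt (Real.log (N:ℝ))) * (Real.log (N:ℝ))⁻¹
        ≤ (Real.log 2)⁻¹ := by
      calc Real.exp (-c*Real.sqrt (Real.log (N:ℝ))) * (Real.log (N:ℝ))⁻¹
          ≤ 1 * (Real.log 2)⁻¹ := mul_le_mul hE1 hinv hinv0 (by norm_num)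
      _ = (Real.log 2)⁻¹ := by ring
    have h5 := mul_le_mul_of_nonneg_left h4 hC.le
    have h6 : (0:ℝ) ≤ (1/32)*(Real.log (N:ℝ))⁻¹ := by positivity
    linarith
  -- main sum
  have hpt : ∀ k ∈ Icc 2 (N-1),
      (1/32) * (((Real.log (k:ℕ))⁻¹ - (Real.log (k+1:ℕ))⁻¹) + gg (k+1))
        - C * (((Real.log (k:ℕ))⁻¹ - (Real.log (k+1:ℕ))⁻¹)
          + (4/c^2)*((k:ℝ)*Real.log (k:ℕ)^2)⁻¹)
      ≤ FF S k * (gg k - gg (k+1)) := by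
    intro k hk
    have hk2 : 2 ≤ k := (Finset.mem_Icc.mp hk).1
    have hΔ : 0 ≤ gg k - gg (k+1) := sub_nonneg.mpr (gg_succ_le hk2)
    have h1 : ((k:ℝ)/32 - C*(k:ℝ)*Real.exp (-c*Real.sqrt (Real.log (k:ℝ)))) * (gg k - gg (k+1))
        ≤ FF S k * (gg k - gg (k+1)) :=
      mul_le_mul_of_nonneg_right (hFF k hk2) hΔ
    refine le_trans ?_ h1
    have e1 : ((k:ℝ)/32 - C*(k:ℝ)*Real.exp (-c*Real.sqrt (Real.log (k:ℝ)))) * (gg k - gg (k+1))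
        = (1/32)*((k:ℝ)*(gg k - gg (k+1)))
          - C*Real.exp (-c*Real.sqrt (Real.log (k:ℝ)))*((k:ℝ)*(gg k - gg (k+1))) := by ring
    rw [e1, key_alg hk2]
    have hd := dpos hk2
    have hE1 : Real.exp (-c*Real.sqrt (Real.log (k:ℝ))) ≤ 1 := by
      rw [← Real.exp_zero]
      apply Real.exp_le_exp.mpr
      have : 0 ≤ Real.sqrt (Real.log (k:ℝ)) := Real.sqrt_nonneg _
      nlinarith
    have hE0 : (0:ℝ) ≤ Real.exp (-c*Real.sqrt (Real.log (k:ℝ))) := (Real.exp_pos _).le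
    have hlogk := lognat_pos hk2
    have hk0 : ((k:ℝ)) ≠ 0 := by
      have := cast_two_le hk2; intro h'; rw [h'] at this; norm_num at this
    have hEg : Real.exp (-c*Real.sqrt (Real.log (k:ℝ))) * gg (k+1)
        ≤ (4/c^2) * ((k:ℝ)*Real.log (k:ℕ)^2)⁻¹ := by
      calc Real.exp (-c*Real.sqrt (Real.log (k:ℝ))) * gg (k+1)
          ≤ Real.exp (-c*Real.sqrt (Real.log (k:ℝ))) * gg k :=
            mul_le_mul_of_nonneg_left (gg_succ_le hk2) hE0
      _ ≤ (4/(c^2*Real.log (k:ℝ))) * gg k :=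
            mul_le_mul_of_nonneg_right (exp_bound hc hk2) (gg_pos hk2).le
      _ = (4/c^2) * ((k:ℝ)*Real.log (k:ℕ)^2)⁻¹ := by
            unfold gg
            have hc0 : c ≠ 0 := hc.ne'
            have hl0 : Real.log (k:ℝ) ≠ 0 := hlogk.ne'
            field_simp
    have hEd : Real.exp (-c*Real.sqrt (Real.log (k:ℝ)))
          * ((Real.log (k:ℕ))⁻¹ - (Real.log (k+1:ℕ))⁻¹)
        ≤ ((Real.log (k:ℕ))⁻¹ - (Real.log (k+1:ℕ))⁻¹) := by
      nlinarith
    have hsum1 : Real.exp (-c*Real.sqrt (Real.log (k:ℝ)))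
          * (((Real.log (k:ℕ))⁻¹ - (Real.log (k+1:ℕ))⁻¹) + gg (k+1))
        ≤ ((Real.log (k:ℕ))⁻¹ - (Real.log (k+1:ℕ))⁻¹)
          + (4/c^2) * ((k:ℝ)*Real.log (k:ℕ)^2)⁻¹ := by
      rw [mul_add]
      exact add_le_add hEd hEg
    have := mul_le_mul_of_nonneg_left hsum1 hC.le
    nlinarith
  have hstep := Finset.sum_le_sum hpt
  have hsplit : ∑ k ∈ Icc 2 (N-1),
      ((1/32) * (((Real.log (k:ℕ))⁻¹ - (Real.log (k+1:ℕ))⁻¹) + gg (k+1))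
        - C * (((Real.log (k:ℕ))⁻¹ - (Real.log (k+1:ℕ))⁻¹)
          + (4/c^2)*((k:ℝ)*Real.log (k:ℕ)^2)⁻¹))
      = (1/32) * ((∑ k ∈ Icc 2 (N-1), ((Real.log (k:ℕ))⁻¹ - (Real.log (k+1:ℕ))⁻¹))
          + ∑ k ∈ Icc 2 (N-1), gg (k+1))
        - C * ((∑ k ∈ Icc 2 (N-1), ((Real.log (k:ℕ))⁻¹ - (Real.log (k+1:ℕ))⁻¹))
          + (4/c^2) * ∑ k ∈ Icc 2 (N-1), ((k:ℝ)*Real.log (k:ℕ)^2)⁻¹) := by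
    rw [Finset.sum_sub_distrib, ← Finset.mul_sum, ← Finset.mul_sum,
      Finset.sum_add_distrib, Finset.sum_add_distrib, ← Finset.mul_sum]
  rw [hsplit] at hstep
  -- telescope bounds
  have ht := tele (M := N-1) (by omega)
  have hN11 : N - 1 + 1 = N := by omega
  rw [hN11] at ht
  have hinvN : (Real.log (N:ℕ))⁻¹ ≤ (Real.log 2)⁻¹ :=
    inv_anti₀ hlog2 (Real.log_le_log (by norm_num) (cast_two_le hN2))
  have hinvN0 : (0:ℝ) < (Real.log (N:ℕ))⁻¹ := by
    have := lognat_pos hN2; positivity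
  have hd0 : 0 ≤ ∑ k ∈ Icc 2 (N-1), ((Real.log (k:ℕ))⁻¹ - (Real.log (k+1:ℕ))⁻¹) := by
    rw [ht]; linarith
  have hdle : ∑ k ∈ Icc 2 (N-1), ((Real.log (k:ℕ))⁻¹ - (Real.log (k+1:ℕ))⁻¹)
      ≤ (Real.log 2)⁻¹ := by
    rw [ht]; linarith
  have hrg := reindex_gg hN3
  have hX := sum_inv_klog2 (M := N-1) (by omega)
  have hggge := sum_gg_ge hN3
  -- log log x ≤ log log (N+1)
  have hxN : x ≤ ((N+1:ℕ):ℝ) := by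
    push_cast
    exact le_of_lt (Nat.lt_floor_add_one x)
  have hlx : 0 < Real.log x := log_pos_of_three hx
  have h5 : Real.log x ≤ Real.log ((N+1:ℕ)) := Real.log_le_log (by linarith) hxN
  have h6 : Real.log (Real.log x) ≤ Real.log (Real.log ((N+1:ℕ))) :=
    Real.log_le_log hlx h5
  have h4c : (0:ℝ) ≤ 4/c^2 := by positivity
  have hc2 : (4/c^2) * (∑ k ∈ Icc 2 (N-1), ((k:ℝ)*Real.log (k:ℕ)^2)⁻¹)
      ≤ (4/c^2) * ((2*Real.log 2^2)⁻¹ + (Real.log 2)⁻¹) :=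
    mul_le_mul_of_nonneg_left hX h4c
  have hc3 : C * ((∑ k ∈ Icc 2 (N-1), ((Real.log (k:ℕ))⁻¹ - (Real.log (k+1:ℕ))⁻¹))
        + (4/c^2) * ∑ k ∈ Icc 2 (N-1), ((k:ℝ)*Real.log (k:ℕ)^2)⁻¹)
      ≤ C * ((Real.log 2)⁻¹ + (4/c^2) * ((2*Real.log 2^2)⁻¹ + (Real.log 2)⁻¹)) :=
    mul_le_mul_of_nonneg_left (by linarith) hC.le
  rw [hrg] at hstep
  linarith
end
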